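/- arXiv:2101.03707 — 5 statements merged into one kernel-verified Lean document; each statement's English description precedes it below -/
import Mathlib

section
/- Every feasible solution of the LP relaxation of the PAi formulation is feasible for the LP relaxation of the PA formulation (i.e., PA is obtained from PAi by dropping the forward and backward labeling inequalities), so the optimal value of the PAi LP relaxation is at least that of the PA LP relaxation. Moreover there exist instances where the inclusion of feasible regions is strict: a solution routing the flow of a commodity k into a node on an aggregated arc whose commodity set excludes k and out on the arc labeled {k} can satisfy all PA constraints while violating a forward labeling inequality. -/
open Finset
open scoped Classical

/-- A dispersion of commodities: a commodity set with a common origin together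
with, on each arc, the subset of commodities that are disaggregated there. -/
structure Dispersion (N K : Type) [DecidableEq K] where
  Kb : Finset K
  ob : N
  Db : N × N → Finset K
  hDb : ∀ a, Db a ⊆ Kb

variable {N K : Type} [Fintype N] [DecidableEq N] [DecidableEq K]

/-- The collection `G_b^{ij}` of commodity sets labeling the copies of arc `a`:
the aggregated block `K_b ∖ D_b^{ij}` (if nonempty) together with the
singletons of the disaggregated commodities. -/
noncomputable def Gset (b : Dispersion N K) (a : N × N) : Finset (Finset K) :=
  (if b.Kb \ b.Db a = ∅ then ∅ else {b.Kb \ b.Db a}) ∪ (b.Db a).image (fun k => ({k} : Finset K))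

/-- `L_b^i`: commodities of dispersion `b` with an incident disaggregated arc at `i`. -/
noncomputable def Lset (A : Finset (N × N)) (b : Dispersion N K) (i : N) : Finset K :=
  b.Kb.filter (fun k =>
    (∃ j, (j, i) ∈ A ∧ k ∈ b.Db (j, i)) ∨ (∃ j, (i, j) ∈ A ∧ k ∈ b.Db (i, j)))

/-- `M_b^i`: labels of the intermediate artificial nodes at node `i`. -/
noncomputable def Mset (A : Finset (N × N)) (b : Dispersion N K) (i : N) : Finset (Finset K) :=
  insert (b.Kb \ Lset A b i) ((Lset A b i).image (fun k => ({k} : Finset K)))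

/-- `Ť_b^i`: distinct commodity sets labeling incoming aggregated arcs at `i`. -/
noncomputable def Tin (A : Finset (N × N)) (b : Dispersion N K) (i : N) : Finset (Finset K) :=
  ((univ.filter (fun j => (j, i) ∈ A)).image (fun j => b.Kb \ b.Db (j, i))).filter (fun C => C ≠ ∅)

/-- `T̂_b^i`: distinct commodity sets labeling outgoing aggregated arcs at `i`. -/
noncomputable def Tout (A : Finset (N × N)) (b : Dispersion N K) (i : N) : Finset (Finset K) :=
  ((univ.filter (fun j => (i, j) ∈ A)).image (fun j => b.Kb \ b.Db (i, j))).filter (fun C => C ≠ ∅)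

def Aex : Finset (Fin 5 × Fin 5) := {(0,1),(0,2)}

noncomputable def dspex : Dispersion (Fin 5) (Fin 3) := ⟨{0,1}, 0, fun _ => {0}, by decide⟩

noncomputable def xex : Finset (Fin 3) → Fin 5 × Fin 5 → ℝ :=
  fun D a => if D = {1} ∧ (a = (0,1) ∨ a = (0,2)) then 1 else 0

lemma hGex (a : Fin 5 × Fin 5) : Gset dspex a = {({1} : Finset (Fin 3)), {0}} := by
  simp [Gset, dspex]; decide

lemma xex_nonneg (D : Finset (Fin 3)) (a : Fin 5 × Fin 5) : 0 ≤ xex D a := by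
  unfold xex; split <;> norm_num

/-- Every feasible solution of the LP relaxation of the PAi
formulation is feasible for the LP relaxation of the PA formulation (PA is PAi
without the labeling inequalities); moreover there exist instances where the
inclusion is strict: a PA-feasible solution can violate a forward labeling
inequality. -/
theorem PAi_to_PA_and_strict {B : Type} [Fintype B]
    (A : Finset (N × N)) (u : N × N → ℝ) (d : K → ℝ) (o s : K → N)
    (disp : B → Dispersion N K)
    (x : B → Finset K → N × N → ℝ) (y : N × N → ℝ)
    -- PA constraints
    (hflow : ∀ (b : B) (i : N),
      ∑ j ∈ univ.filter (fun j => (i, j) ∈ A), ∑ D ∈ Gset (disp b) (i, j), x b D (i, j)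
        - ∑ j ∈ univ.filter (fun j => (j, i) ∈ A), ∑ D ∈ Gset (disp b) (j, i), x b D (j, i)
        = ∑ k ∈ (disp b).Kb,
            ((if o k = i then (1 : ℝ) else 0) - (if s k = i then 1 else 0)) * d k)
    (hcap : ∀ a ∈ A, ∑ b, ∑ D ∈ Gset (disp b) a, x b D a ≤ u a * y a)
    (hSI : ∀ (b : B), ∀ a ∈ A, ∀ D ∈ Gset (disp b) a, x b D a ≤ (∑ k ∈ D, d k) * y a)
    (hx : ∀ b D a, 0 ≤ x b D a)
    (hy0 : ∀ a, 0 ≤ y a) (hy1 : ∀ a, y a ≤ 1)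
    -- forward labeling inequalities
    (hfwd : ∀ (b : B), ∀ k ∈ (disp b).Kb, ∀ i : N,
      ∑ j ∈ univ.filter (fun j => (i, j) ∈ A),
          ∑ D ∈ (Gset (disp b) (i, j)).filter (fun D => k ∈ D), x b D (i, j)
        - ∑ j ∈ univ.filter (fun j => (j, i) ∈ A),
          ∑ D ∈ (Gset (disp b) (j, i)).filter (fun D => D = {k}), x b D (j, i)
        ≥ ((if o k = i then (1 : ℝ) else 0) - (if s k = i then 1 else 0)) * d k)
    -- backward labeling inequalities
    (hbwd : ∀ (b : B), ∀ k ∈ (disp b).Kb, ∀ i : N,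
      ∑ j ∈ univ.filter (fun j => (i, j) ∈ A),
          ∑ D ∈ (Gset (disp b) (i, j)).filter (fun D => D = {k}), x b D (i, j)
        - ∑ j ∈ univ.filter (fun j => (j, i) ∈ A),
          ∑ D ∈ (Gset (disp b) (j, i)).filter (fun D => k ∈ D), x b D (j, i)
        ≤ ((if o k = i then (1 : ℝ) else 0) - (if s k = i then 1 else 0)) * d k) :
    -- (x, y) is feasible for the PA LP relaxation:
    ((∀ (b : B) (i : N),
      ∑ j ∈ univ.filter (fun j => (i, j) ∈ A), ∑ D ∈ Gset (disp b) (i, j), x b D (i, j)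
        - ∑ j ∈ univ.filter (fun j => (j, i) ∈ A), ∑ D ∈ Gset (disp b) (j, i), x b D (j, i)
        = ∑ k ∈ (disp b).Kb,
            ((if o k = i then (1 : ℝ) else 0) - (if s k = i then 1 else 0)) * d k)
    ∧ (∀ a ∈ A, ∑ b, ∑ D ∈ Gset (disp b) a, x b D a ≤ u a * y a)
    ∧ (∀ (b : B), ∀ a ∈ A, ∀ D ∈ Gset (disp b) a, x b D a ≤ (∑ k ∈ D, d k) * y a)
    ∧ (∀ b D a, 0 ≤ x b D a)
    ∧ (∀ a, 0 ≤ y a ∧ y a ≤ 1))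
    ∧
    -- strictness: there is an instance with a PA-feasible point violating a
    -- forward labeling inequality
    (∃ (A' : Finset (Fin 5 × Fin 5)) (dsp : Dispersion (Fin 5) (Fin 3))
        (u' : Fin 5 × Fin 5 → ℝ) (d' : Fin 3 → ℝ) (o' s' : Fin 3 → Fin 5)
        (x' : Finset (Fin 3) → Fin 5 × Fin 5 → ℝ) (y' : Fin 5 × Fin 5 → ℝ),
      (∀ i : Fin 5,
        ∑ j ∈ univ.filter (fun j => (i, j) ∈ A'), ∑ D ∈ Gset dsp (i, j), x' D (i, j)
          - ∑ j ∈ univ.filter (fun j => (j, i) ∈ A'), ∑ D ∈ Gset dsp (j, i), x' D (j, i)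
          = ∑ k ∈ dsp.Kb,
              ((if o' k = i then (1 : ℝ) else 0) - (if s' k = i then 1 else 0)) * d' k)
      ∧ (∀ a ∈ A', ∑ D ∈ Gset dsp a, x' D a ≤ u' a * y' a)
      ∧ (∀ a ∈ A', ∀ D ∈ Gset dsp a, x' D a ≤ (∑ k ∈ D, d' k) * y' a)
      ∧ (∀ D a, 0 ≤ x' D a)
      ∧ (∀ a, 0 ≤ y' a ∧ y' a ≤ 1)
      ∧ ∃ k ∈ dsp.Kb, ∃ i : Fin 5,
          ¬ (∑ j ∈ univ.filter (fun j => (i, j) ∈ A'),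
                ∑ D ∈ (Gset dsp (i, j)).filter (fun D => k ∈ D), x' D (i, j)
              - ∑ j ∈ univ.filter (fun j => (j, i) ∈ A'),
                ∑ D ∈ (Gset dsp (j, i)).filter (fun D => D = {k}), x' D (j, i)
              ≥ ((if o' k = i then (1 : ℝ) else 0) - (if s' k = i then 1 else 0)) * d' k)) := by
  refine ⟨⟨hflow, hcap, hSI, hx, fun a => ⟨hy0 a, hy1 a⟩⟩, ?_⟩
  refine ⟨Aex, dspex, fun _ => 10, fun _ => 1, fun _ => 0, ![1, 2, 0], xex,
      fun _ => 1, ?_, ?_, ?_, fun D a => xex_nonneg D a, fun a => ⟨by norm_num, le_refl 1⟩, ?_⟩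
  · intro i
    have hKb : dspex.Kb = {0, 1} := rfl
    simp only [hGex, hKb, Finset.sum_filter, Fin.sum_univ_five,
      Finset.sum_pair (by decide : ({1} : Finset (Fin 3)) ≠ {0}),
      Finset.sum_pair (by decide : (0 : Fin 3) ≠ 1)]
    fin_cases i <;>
      norm_num [xex, Aex, Prod.ext_iff, Fin.ext_iff, Matrix.cons_val_zero, Matrix.cons_val_one,
        show ((3:Fin 5):ℕ) = 3 from rfl, show ((4:Fin 5):ℕ) = 4 from rfl]
  · intro a ha
    simp only [hGex, Finset.sum_pair (by decide : ({1} : Finset (Fin 3)) ≠ {0})]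
    have h1 : xex {1} a ≤ 1 := by unfold xex; split <;> norm_num
    have h0 : xex {0} a ≤ 0 := by
      unfold xex; split
      · next h => exact absurd h.1 (by decide)
      · norm_num
    linarith
  · intro a ha D hD
    rw [hGex] at hD
    rcases Finset.mem_insert.mp hD with h | h
    · subst h
      have : (∑ k ∈ ({1} : Finset (Fin 3)), (1:ℝ)) = 1 := by simp
      rw [this, one_mul]
      unfold xex; split <;> norm_num
    · rw [Finset.mem_singleton.mp h]
      have : (∑ k ∈ ({0} : Finset (Fin 3)), (1:ℝ)) = 1 := by simp
      rw [this, one_mul]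
      unfold xex; split
      · next hc => exact absurd hc.1 (by decide)
      · norm_num
  · refine ⟨0, by decide, 0, ?_⟩
    have hf : ∀ a : Fin 5 × Fin 5,
        (Gset dspex a).filter (fun D => (0:Fin 3) ∈ D) = {({0} : Finset (Fin 3))} := by
      intro a; rw [hGex]; decide
    have hf2 : ∀ a : Fin 5 × Fin 5,
        (Gset dspex a).filter (fun D => D = ({0}:Finset (Fin 3))) = {({0} : Finset (Fin 3))} := by
      intro a; rw [hGex]; decide
    simp only [hf, hf2, Finset.sum_filter, Fin.sum_univ_five, Finset.sum_singleton]
    norm_num [xex, Aex, Prod.ext_iff, Fin.ext_iff]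
end

section
/- For a node i of a dispersion layer b with the PAe gadget, if a solution satisfies the gadget equalities — flow conservation at each intermediate node D ∈ M_b^i (net outflow on disaggregated arcs plus net outflow on artificial arcs equals ∑_{k∈D}(o^k_i − s^k_i)d^k), at each in-flow aggregated node C ∈ Ť_b^i (∑_{D∈M_b^i: C∩D≠∅} z_{CD} = ∑_{j: C=K_b^{ji}} x^C_{ji}), and at each out-flow aggregated node C ∈ T̂_b^i (∑_{j: C=K_b^{ij}} x^C_{ij} = ∑_{D∈M_b^i: C∩D≠∅} z_{DC}) with z ≥ 0 — then for each commodity k with {k} ∈ M_b^i the forward labeling inequality ∑_{j∈N_i^+} ∑_{D∈G_b^{ij}: k∈D} x^D_{ij} − ∑_{j∈N_i^-} ∑_{D∈G_b^{ji}: D={k}} x^D_{ji} ≥ (o^k_i − s^k_i)d^k holds. -/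
open Finset
open scoped Classical

variable {N K : Type} [Fintype N] [DecidableEq N] [DecidableEq K]

lemma singleton_inter_nonempty' {K : Type} [DecidableEq K] {k : K} {s : Finset K} :
    (({k} : Finset K) ∩ s).Nonempty ↔ k ∈ s := by
  constructor
  · rintro ⟨a, ha⟩
    rw [Finset.mem_inter, Finset.mem_singleton] at ha
    rcases ha with ⟨rfl, h⟩; exact h
  · intro h; exact ⟨k, Finset.mem_inter.2 ⟨Finset.mem_singleton_self k, h⟩⟩

lemma inter_singleton_nonempty' {K : Type} [DecidableEq K] {k : K} {s : Finset K} :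
    (s ∩ ({k} : Finset K)).Nonempty ↔ k ∈ s := by
  rw [Finset.inter_comm]; exact singleton_inter_nonempty'

/-- at a node `i` of a dispersion layer `b`, if a (nonnegative)
solution satisfies the PAe gadget flow conservation equalities at the
intermediate, in-flow aggregated and out-flow aggregated artificial nodes,
then for every commodity `k` with `{k} ∈ M_b^i` the forward labeling
inequality holds at `i`. -/
theorem gadget_implies_forward
    (A : Finset (N × N)) (d : K → ℝ) (o s : K → N)
    (b : Dispersion N K) (i : N)
    (x : Finset K → N × N → ℝ)
    (zin zout : Finset K → Finset K → ℝ)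
    (hx : ∀ D a, 0 ≤ x D a)
    (hznn : ∀ C D, 0 ≤ zin C D ∧ 0 ≤ zout D C)
    (hz1 : ∀ D ∈ Mset A b i,
      (∑ j ∈ univ.filter (fun j => (i, j) ∈ A ∧ (D ∩ b.Db (i, j)).Nonempty), x D (i, j)
        - ∑ j ∈ univ.filter (fun j => (j, i) ∈ A ∧ (D ∩ b.Db (j, i)).Nonempty), x D (j, i))
      + (∑ C ∈ (Tout A b i).filter (fun C => (D ∩ C).Nonempty), zout D C
        - ∑ C ∈ (Tin A b i).filter (fun C => (C ∩ D).Nonempty), zin C D)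
      = ∑ k ∈ D, ((if o k = i then (1 : ℝ) else 0) - (if s k = i then 1 else 0)) * d k)
    (hz2 : ∀ C ∈ Tin A b i,
      ∑ D ∈ (Mset A b i).filter (fun D => (C ∩ D).Nonempty), zin C D
        = ∑ j ∈ univ.filter (fun j => (j, i) ∈ A ∧ C = b.Kb \ b.Db (j, i)), x C (j, i))
    (hz3 : ∀ C ∈ Tout A b i,
      ∑ j ∈ univ.filter (fun j => (i, j) ∈ A ∧ C = b.Kb \ b.Db (i, j)), x C (i, j)
        = ∑ D ∈ (Mset A b i).filter (fun D => (C ∩ D).Nonempty), zout D C) :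
    ∀ k : K, ({k} : Finset K) ∈ Mset A b i →
      ∑ j ∈ univ.filter (fun j => (i, j) ∈ A),
          ∑ D ∈ (Gset b (i, j)).filter (fun D => k ∈ D), x D (i, j)
        - ∑ j ∈ univ.filter (fun j => (j, i) ∈ A),
          ∑ D ∈ (Gset b (j, i)).filter (fun D => D = {k}), x D (j, i)
        ≥ ((if o k = i then (1 : ℝ) else 0) - (if s k = i then 1 else 0)) * d k := by
  intro k hk
  -- k belongs to K_b
  have hkKb : k ∈ b.Kb := by
    rcases Finset.mem_insert.1 hk with h | h
    · have hmem : k ∈ b.Kb \ Lset A b i := h ▸ Finset.mem_singleton_self k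
      exact (Finset.mem_sdiff.1 hmem).1
    · rcases Finset.mem_image.1 h with ⟨k', hk', he⟩
      rw [Finset.singleton_inj] at he
      subst he
      exact (Finset.mem_filter.1 hk').1
  -- the only intermediate node meeting {k} is {k} itself
  have hMk : (Mset A b i).filter (fun D => (({k} : Finset K) ∩ D).Nonempty) = {{k}} := by
    ext D
    simp only [Finset.mem_filter, Finset.mem_singleton, singleton_inter_nonempty']
    constructor
    · rintro ⟨hD, hkD⟩
      rcases Finset.mem_insert.1 hD with h | h
      · subst h
        rcases Finset.mem_insert.1 hk with h2 | h2
        · exact h2.symm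
        · rcases Finset.mem_image.1 h2 with ⟨k', hk', he⟩
          rw [Finset.singleton_inj] at he
          subst he
          exact absurd hk' (Finset.mem_sdiff.1 hkD).2
      · rcases Finset.mem_image.1 h with ⟨k', _, he⟩
        subst he
        rw [Finset.mem_singleton] at hkD
        rw [hkD]
    · rintro rfl
      exact ⟨hk, Finset.mem_singleton_self k⟩
  -- description of the outgoing copies containing k
  have hGout : ∀ j, ((Gset b (i, j)).filter (fun D => k ∈ D))
      = if k ∈ b.Db (i, j) then {({k} : Finset K)} else {b.Kb \ b.Db (i, j)} := by
    intro j
    by_cases hkd : k ∈ b.Db (i, j)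
    · rw [if_pos hkd]
      ext D
      simp only [Finset.mem_filter, Finset.mem_singleton]
      constructor
      · rintro ⟨hD, hkD⟩
        rcases Finset.mem_union.1 hD with h | h
        · split_ifs at h with hemp
          · exact absurd h (Finset.notMem_empty D)
          · rw [Finset.mem_singleton] at h
            subst h
            exact absurd hkd (Finset.mem_sdiff.1 hkD).2
        · rcases Finset.mem_image.1 h with ⟨k', _, he⟩
          subst he
          rw [Finset.mem_singleton] at hkD
          rw [hkD]
      · rintro rfl
        exact ⟨Finset.mem_union.2 (Or.inr (Finset.mem_image.2 ⟨k, hkd, rfl⟩)),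
          Finset.mem_singleton_self k⟩
    · rw [if_neg hkd]
      have hkagg : k ∈ b.Kb \ b.Db (i, j) := Finset.mem_sdiff.2 ⟨hkKb, hkd⟩
      ext D
      simp only [Finset.mem_filter, Finset.mem_singleton]
      constructor
      · rintro ⟨hD, hkD⟩
        rcases Finset.mem_union.1 hD with h | h
        · split_ifs at h with hemp
          · exact absurd h (Finset.notMem_empty D)
          · exact Finset.mem_singleton.1 h
        · rcases Finset.mem_image.1 h with ⟨k', hk', he⟩
          subst he
          rw [Finset.mem_singleton] at hkD
          subst hkD
          exact absurd hk' hkd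
      · rintro rfl
        refine ⟨Finset.mem_union.2 (Or.inl ?_), hkagg⟩
        rw [if_neg (Finset.ne_empty_of_mem hkagg)]
        exact Finset.mem_singleton_self _
    -- description of the incoming copies equal to {k}
  have hGin : ∀ j, ((Gset b (j, i)).filter (fun D => D = {k}))
      = if (k ∈ b.Db (j, i) ∨ ({k} : Finset K) = b.Kb \ b.Db (j, i))
          then {({k} : Finset K)} else ∅ := by
    intro j
    have hiff : (({k} : Finset K) ∈ Gset b (j, i))
        ↔ (k ∈ b.Db (j, i) ∨ ({k} : Finset K) = b.Kb \ b.Db (j, i)) := by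
      constructor
      · intro h
        rcases Finset.mem_union.1 h with h | h
        · split_ifs at h with hemp
          · exact absurd h (Finset.notMem_empty _)
          · exact Or.inr (Finset.mem_singleton.1 h)
        · rcases Finset.mem_image.1 h with ⟨k', hk', he⟩
          rw [Finset.singleton_inj] at he
          subst he
          exact Or.inl hk'
      · rintro (h | h)
        · exact Finset.mem_union.2 (Or.inr (Finset.mem_image.2 ⟨k, h, rfl⟩))
        · refine Finset.mem_union.2 (Or.inl ?_)
          rw [if_neg (by rw [← h]; exact Finset.singleton_ne_empty k)]
          rw [Finset.mem_singleton]
          exact h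
    rw [Finset.filter_eq']
    by_cases hc : k ∈ b.Db (j, i) ∨ ({k} : Finset K) = b.Kb \ b.Db (j, i)
    · rw [if_pos (hiff.2 hc), if_pos hc]
    · rw [if_neg (fun h => hc (hiff.1 h)), if_neg hc]
  -- splitting sums over arcs by a predicate
  have hsplitO : ∀ (f : N → ℝ) (p : N → Prop),
      ∑ j ∈ univ.filter (fun j => (i, j) ∈ A), f j
        = ∑ j ∈ univ.filter (fun j => (i, j) ∈ A ∧ p j), f j
          + ∑ j ∈ univ.filter (fun j => (i, j) ∈ A ∧ ¬ p j), f j := by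
    intro f p
    rw [← Finset.sum_filter_add_sum_filter_not (univ.filter (fun j => (i, j) ∈ A)) p,
      Finset.filter_filter, Finset.filter_filter]
  have hsplitI : ∀ (f : N → ℝ) (p : N → Prop),
      ∑ j ∈ univ.filter (fun j => (j, i) ∈ A), f j
        = ∑ j ∈ univ.filter (fun j => (j, i) ∈ A ∧ p j), f j
          + ∑ j ∈ univ.filter (fun j => (j, i) ∈ A ∧ ¬ p j), f j := by
    intro f p
    rw [← Finset.sum_filter_add_sum_filter_not (univ.filter (fun j => (j, i) ∈ A)) p,
      Finset.filter_filter, Finset.filter_filter]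
  -- rewrite the outgoing double sum
  have hOut : ∑ j ∈ univ.filter (fun j => (i, j) ∈ A),
        ∑ D ∈ (Gset b (i, j)).filter (fun D => k ∈ D), x D (i, j)
      = ∑ j ∈ univ.filter (fun j => (i, j) ∈ A ∧ k ∈ b.Db (i, j)), x {k} (i, j)
        + ∑ j ∈ univ.filter (fun j => (i, j) ∈ A ∧ k ∉ b.Db (i, j)),
            x (b.Kb \ b.Db (i, j)) (i, j) := by
    rw [hsplitO (fun j => ∑ D ∈ (Gset b (i, j)).filter (fun D => k ∈ D), x D (i, j))
      (fun j => k ∈ b.Db (i, j))]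
    congr 1
    · refine Finset.sum_congr (Finset.ext fun j => by simp) fun j hj => ?_
      rw [hGout j, if_pos (Finset.mem_filter.1 hj).2.2, Finset.sum_singleton]
    · refine Finset.sum_congr (Finset.ext fun j => by simp) fun j hj => ?_
      rw [hGout j, if_neg (Finset.mem_filter.1 hj).2.2, Finset.sum_singleton]
  -- rewrite the incoming double sum
  have hIn : ∑ j ∈ univ.filter (fun j => (j, i) ∈ A),
        ∑ D ∈ (Gset b (j, i)).filter (fun D => D = {k}), x D (j, i)
      = ∑ j ∈ univ.filter (fun j => (j, i) ∈ A ∧ k ∈ b.Db (j, i)), x {k} (j, i)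
        + ∑ j ∈ univ.filter
            (fun j => (j, i) ∈ A ∧ ({k} : Finset K) = b.Kb \ b.Db (j, i)), x {k} (j, i) := by
    have hpt : ∀ j, ∑ D ∈ (Gset b (j, i)).filter (fun D => D = {k}), x D (j, i)
        = (if k ∈ b.Db (j, i) then x {k} (j, i) else 0)
          + (if ({k} : Finset K) = b.Kb \ b.Db (j, i) then x {k} (j, i) else 0) := by
      intro j
      rw [hGin j]
      by_cases h1 : k ∈ b.Db (j, i)
      · have h2 : ¬ (({k} : Finset K) = b.Kb \ b.Db (j, i)) := by
          intro he
          have hmem : k ∈ b.Kb \ b.Db (j, i) := he ▸ Finset.mem_singleton_self k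
          exact (Finset.mem_sdiff.1 hmem).2 h1
        rw [if_pos (Or.inl h1), if_pos h1, if_neg h2, Finset.sum_singleton, add_zero]
      · by_cases h2 : ({k} : Finset K) = b.Kb \ b.Db (j, i)
        · rw [if_pos (Or.inr h2), if_neg h1, if_pos h2, Finset.sum_singleton, zero_add]
        · rw [if_neg (by tauto), if_neg h1, if_neg h2, Finset.sum_empty, add_zero]
    rw [Finset.sum_congr rfl (fun j _ => hpt j), Finset.sum_add_distrib,
      ← Finset.sum_filter, ← Finset.sum_filter, Finset.filter_filter, Finset.filter_filter]
  -- specialize the intermediate-node balance to D = {k}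
  have h1 := hz1 {k} hk
  simp only [singleton_inter_nonempty', inter_singleton_nonempty',
    Finset.sum_singleton] at h1
  -- the aggregated outflow dominates the artificial outflow from {k}
  have hAgg : ∑ C ∈ (Tout A b i).filter (fun C => k ∈ C), zout {k} C
      ≤ ∑ j ∈ univ.filter (fun j => (i, j) ∈ A ∧ k ∉ b.Db (i, j)),
          x (b.Kb \ b.Db (i, j)) (i, j) := by
    have hmap : ∀ j ∈ univ.filter (fun j => (i, j) ∈ A ∧ k ∉ b.Db (i, j)),
        (b.Kb \ b.Db (i, j)) ∈ (Tout A b i).filter (fun C => k ∈ C) := by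
      intro j hj
      obtain ⟨-, hA, hnd⟩ := Finset.mem_filter.1 hj
      have hkagg : k ∈ b.Kb \ b.Db (i, j) := Finset.mem_sdiff.2 ⟨hkKb, hnd⟩
      refine Finset.mem_filter.2 ⟨Finset.mem_filter.2 ⟨Finset.mem_image.2
        ⟨j, Finset.mem_filter.2 ⟨Finset.mem_univ j, hA⟩, rfl⟩,
        Finset.ne_empty_of_mem hkagg⟩, hkagg⟩
    rw [← Finset.sum_fiberwise_of_maps_to hmap (fun j => x (b.Kb \ b.Db (i, j)) (i, j))]
    refine Finset.sum_le_sum fun C hC => ?_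
    have hkC : k ∈ C := (Finset.mem_filter.1 hC).2
    have hCT : C ∈ Tout A b i := (Finset.mem_filter.1 hC).1
    have hset : (univ.filter (fun j => (i, j) ∈ A ∧ k ∉ b.Db (i, j))).filter
          (fun j => b.Kb \ b.Db (i, j) = C)
        = univ.filter (fun j => (i, j) ∈ A ∧ C = b.Kb \ b.Db (i, j)) := by
      rw [Finset.filter_filter]
      refine Finset.filter_congr fun j _ => ?_
      constructor
      · rintro ⟨⟨hA, -⟩, he⟩; exact ⟨hA, he.symm⟩
      · rintro ⟨hA, he⟩
        refine ⟨⟨hA, fun hkd => ?_⟩, he.symm⟩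
        have hmem : k ∈ b.Kb \ b.Db (i, j) := he ▸ hkC
        exact (Finset.mem_sdiff.1 hmem).2 hkd
    have hinner : ∑ j ∈ (univ.filter (fun j => (i, j) ∈ A ∧ k ∉ b.Db (i, j))).filter
          (fun j => b.Kb \ b.Db (i, j) = C), x (b.Kb \ b.Db (i, j)) (i, j)
        = ∑ j ∈ univ.filter (fun j => (i, j) ∈ A ∧ C = b.Kb \ b.Db (i, j)), x C (i, j) := by
      rw [hset]
      refine Finset.sum_congr rfl fun j hj => ?_
      rw [← (Finset.mem_filter.1 hj).2.2]
    rw [hinner, hz3 C hCT]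
    refine Finset.single_le_sum (fun D _ => (hznn C D).2) ?_
    exact Finset.mem_filter.2 ⟨hk, ⟨k, Finset.mem_inter.2 ⟨hkC, Finset.mem_singleton_self k⟩⟩⟩
  -- the artificial inflow into {k} dominates the extra aggregated inflow
  have hExtra : ∑ j ∈ univ.filter
        (fun j => (j, i) ∈ A ∧ ({k} : Finset K) = b.Kb \ b.Db (j, i)), x {k} (j, i)
      ≤ ∑ C ∈ (Tin A b i).filter (fun C => k ∈ C), zin C {k} := by
    rcases (univ.filter
        (fun j => (j, i) ∈ A ∧ ({k} : Finset K) = b.Kb \ b.Db (j, i))).eq_empty_or_nonempty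
      with hE | hE
    · rw [hE, Finset.sum_empty]
      exact Finset.sum_nonneg fun C _ => (hznn C {k}).1
    · obtain ⟨j0, hj0⟩ := hE
      obtain ⟨-, hA0, he0⟩ := Finset.mem_filter.1 hj0
      have hkTin : ({k} : Finset K) ∈ Tin A b i :=
        Finset.mem_filter.2 ⟨Finset.mem_image.2
          ⟨j0, Finset.mem_filter.2 ⟨Finset.mem_univ j0, hA0⟩, he0.symm⟩,
          Finset.singleton_ne_empty k⟩
      have h2' := hz2 {k} hkTin
      rw [hMk, Finset.sum_singleton] at h2'
      rw [← h2']
      exact Finset.single_le_sum (fun C _ => (hznn C {k}).1)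
        (Finset.mem_filter.2 ⟨hkTin, Finset.mem_singleton_self k⟩)
  rw [ge_iff_le, hOut, hIn]
  linarith [h1, hAgg, hExtra]
end

section
/- There exists a feasible solution of the PAi LP relaxation constraints at a node that is infeasible for the PAe gadget equalities: with K_b = {k₁,k₂,k₃,k₄}, all commodities disaggregated on arcs (1,i) and (i,3) and all aggregated on arcs (2,i) and (i,4), the assignment x^{{k₁}}_{1i} = x^{{k₂}}_{1i} = 1, x^{{k₃}}_{1i} = x^{{k₄}}_{1i} = 0, x^{{k₁}}_{i3} = x^{{k₂}}_{i3} = 0, x^{{k₃}}_{i3} = x^{{k₄}}_{i3} = 1, x^{K_b}_{2i} = x^{K_b}_{i4} = 1 satisfies the aggregated flow conservation at i and the forward and backward labeling inequalities for every commodity, but admits no nonnegative artificial-arc flows z satisfying the PAe gadget flow conservation equalities at node i. -/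
open Finset

/-- Disaggregated flows on arc `(1,i)` in Figure 5: one unit each for
commodities `k₁, k₂`. -/
noncomputable def x1i : Fin 4 → ℝ := fun k => if k = 0 ∨ k = 1 then 1 else 0

/-- Disaggregated flows on arc `(i,3)` in Figure 5: one unit each for
commodities `k₃, k₄`. -/
noncomputable def xi3 : Fin 4 → ℝ := fun k => if k = 2 ∨ k = 3 then 1 else 0

/-- Aggregated flow (label `K_b`) on arc `(2,i)`. -/
noncomputable def x2i : ℝ := 1

/-- Aggregated flow (label `K_b`) on arc `(i,4)`. -/
noncomputable def xi4 : ℝ := 1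

/-- the solution of Figure 5 (all demands routed through node `i`,
which is neither origin nor destination, so all right-hand sides vanish)
satisfies the PA aggregated flow conservation at `i` and all forward and
backward labeling inequalities, yet no nonnegative artificial-arc flows `z`
satisfy the PAe gadget flow conservation equalities at node `i`. -/
theorem PAi_point_infeasible_for_PAe :
    -- aggregated flow conservation at node i
    ((∑ k : Fin 4, xi3 k) + xi4 - ((∑ k : Fin 4, x1i k) + x2i) = 0)
    -- forward labeling inequalities at node i
    ∧ (∀ k : Fin 4, (xi3 k + xi4) - x1i k ≥ 0)
    -- backward labeling inequalities at node i
    ∧ (∀ k : Fin 4, xi3 k - (x1i k + x2i) ≤ 0)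
    -- no feasible gadget routing
    ∧ ¬ ∃ zin zout : Fin 4 → ℝ,
        (∀ k, 0 ≤ zin k ∧ 0 ≤ zout k)
        -- flow conservation at the intermediate node of each commodity k
        ∧ (∀ k, (xi3 k - x1i k) + (zout k - zin k) = 0)
        -- flow conservation at the in-flow aggregated node labeled K_b
        ∧ (∑ k : Fin 4, zin k) = x2i
        -- flow conservation at the out-flow aggregated node labeled K_b
        ∧ xi4 = ∑ k : Fin 4, zout k := by
  refine ⟨?_, ?_, ?_, ?_⟩
  · simp only [x1i, xi3, x2i, xi4, Fin.sum_univ_four]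
    simp only [if_neg (show ¬((2:Fin 4) = 0 ∨ (2:Fin 4) = 1) by decide),
      if_neg (show ¬((3:Fin 4) = 0 ∨ (3:Fin 4) = 1) by decide),
      if_neg (show ¬((0:Fin 4) = 2 ∨ (0:Fin 4) = 3) by decide),
      if_neg (show ¬((1:Fin 4) = 2 ∨ (1:Fin 4) = 3) by decide),
      if_pos (show ((2:Fin 4) = 2 ∨ (2:Fin 4) = 3) by decide),
      if_pos (show ((3:Fin 4) = 2 ∨ (3:Fin 4) = 3) by decide),
      if_pos (show ((0:Fin 4) = 0 ∨ (0:Fin 4) = 1) by decide),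
      if_pos (show ((1:Fin 4) = 0 ∨ (1:Fin 4) = 1) by decide)]
    norm_num
  · intro k
    fin_cases k <;> simp [x1i, xi3, xi4]
  · intro k
    fin_cases k <;> simp [x1i, xi3, x2i]
  · rintro ⟨zin, zout, hnn, hcons, hin, -⟩
    have h2 := hcons 2
    have h3 := hcons 3
    simp [x1i, xi3] at h2 h3
    have hin' := hin
    rw [Fin.sum_univ_four] at hin'
    have n0 := (hnn 0).1
    have n1 := (hnn 1).1
    have o2 := (hnn 2).2
    have o3 := (hnn 3).2
    simp only [x2i] at hin'
    linarith
end

section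
/- Let B^p be any partial aggregation and let B^f be the full aggregation (one dispersion per origin node, no commodities disaggregated on any arc). If (x̄, ȳ) is feasible for the LP relaxation of the PA formulation based on B^p, then setting x^{K_n}_{ij} := ∑_{b∈B^p: o_b = n} ∑_{D∈G_b^{ij}} x̄^D_{ij} for each origin n and y := ȳ yields a feasible solution of the LP relaxation of the FA formulation, with the same objective value. Hence the optimal value of the PA LP relaxation is at least the optimal value of the FA LP relaxation. -/
open Finset
open scoped Classical

variable {N K : Type} [Fintype N] [DecidableEq N] [DecidableEq K]

/-- Summing a function over the blocks of `Gset b a` gives its sum over `Kb`. -/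
lemma Gsum_eq (b : Dispersion N K) (a : N × N) (g : K → ℝ) :
    ∑ D ∈ Gset b a, ∑ k ∈ D, g k = ∑ k ∈ b.Kb, g k := by
  classical
  have hdisj : Disjoint (if b.Kb \ b.Db a = ∅ then (∅ : Finset (Finset K)) else {b.Kb \ b.Db a})
      ((b.Db a).image (fun k => ({k} : Finset K))) := by
    split_ifs with h
    · simp
    · rw [Finset.disjoint_left]
      intro C hC hC'
      simp only [Finset.mem_singleton] at hC
      simp only [Finset.mem_image] at hC'
      obtain ⟨k, hk, hk'⟩ := hC'
      subst hC
      have : k ∈ b.Kb \ b.Db a := by rw [← hk']; simp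
      simp only [Finset.mem_sdiff] at this
      exact this.2 hk
  rw [Gset, Finset.sum_union hdisj]
  have h1 : ∑ D ∈ (if b.Kb \ b.Db a = ∅ then (∅ : Finset (Finset K)) else {b.Kb \ b.Db a}),
      ∑ k ∈ D, g k = ∑ k ∈ b.Kb \ b.Db a, g k := by
    split_ifs with h
    · simp [h]
    · simp
  have h2 : ∑ D ∈ (b.Db a).image (fun k => ({k} : Finset K)), ∑ k ∈ D, g k
      = ∑ k ∈ b.Db a, g k := by
    rw [Finset.sum_image]
    · simp
    · intro k _ k' _ h
      simpa using h
  rw [h1, h2, Finset.sum_sdiff (b.hDb a)]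

/-- Summing over dispersions with origin `n` their commodity sums equals the sum
over commodities with origin `n`. -/
lemma fiber_sum {B : Type} [Fintype B] [Fintype K] (o : K → N) (disp : B → Dispersion N K)
    (hcov : ∀ k : K, ∃! b : B, k ∈ (disp b).Kb)
    (horig : ∀ b : B, ∀ k ∈ (disp b).Kb, o k = (disp b).ob)
    (n : N) (g : K → ℝ) :
    ∑ b ∈ univ.filter (fun b : B => (disp b).ob = n), ∑ k ∈ (disp b).Kb, g k
      = ∑ k ∈ univ.filter (fun k : K => o k = n), g k := by
  classical
  rw [← Finset.sum_biUnion]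
  · congr 1
    ext k
    simp only [Finset.mem_biUnion, Finset.mem_filter, Finset.mem_univ, true_and]
    constructor
    · rintro ⟨b, hb, hk⟩
      rw [horig b k hk, hb]
    · intro hk
      obtain ⟨b, hb, -⟩ := hcov k
      exact ⟨b, by rw [← horig b k hb, hk], hb⟩
  · intro b hb b' hb' hne
    simp only [Function.onFun]
    rw [Finset.disjoint_left]
    intro k hk hk'
    obtain ⟨b₀, -, huniq⟩ := hcov k
    exact hne ((huniq b hk).trans (huniq b' hk').symm)

/-- any feasible solution of the LP relaxation of the PA
formulation (based on a partial aggregation `disp`) maps, by summing over the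
dispersions with a common origin, to a feasible solution of the LP relaxation
of the FA formulation with the same objective value. -/
theorem PA_to_FA {B : Type} [Fintype B] [Fintype K]
    (A : Finset (N × N)) (u c f : N × N → ℝ) (d : K → ℝ) (o s : K → N)
    (disp : B → Dispersion N K)
    (hcov : ∀ k : K, ∃! b : B, k ∈ (disp b).Kb)
    (horig : ∀ b : B, ∀ k ∈ (disp b).Kb, o k = (disp b).ob)
    (x : B → Finset K → N × N → ℝ) (y : N × N → ℝ)
    -- PA constraints
    (hflow : ∀ (b : B) (i : N),
      ∑ j ∈ univ.filter (fun j => (i, j) ∈ A), ∑ D ∈ Gset (disp b) (i, j), x b D (i, j)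
        - ∑ j ∈ univ.filter (fun j => (j, i) ∈ A), ∑ D ∈ Gset (disp b) (j, i), x b D (j, i)
        = ∑ k ∈ (disp b).Kb,
            ((if o k = i then (1 : ℝ) else 0) - (if s k = i then 1 else 0)) * d k)
    (hcap : ∀ a ∈ A, ∑ b, ∑ D ∈ Gset (disp b) a, x b D a ≤ u a * y a)
    (hSI : ∀ (b : B), ∀ a ∈ A, ∀ D ∈ Gset (disp b) a, x b D a ≤ (∑ k ∈ D, d k) * y a)
    (hx : ∀ b D a, 0 ≤ x b D a)
    (hy0 : ∀ a, 0 ≤ y a) (hy1 : ∀ a, y a ≤ 1)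
    -- the aggregated (FA) flow variables
    (X : N → N × N → ℝ)
    (hX : ∀ (n : N) (a : N × N),
      X n a = ∑ b ∈ univ.filter (fun b : B => (disp b).ob = n), ∑ D ∈ Gset (disp b) a, x b D a) :
    -- FA flow conservation per origin and node
    (∀ (n : N) (i : N),
      ∑ j ∈ univ.filter (fun j => (i, j) ∈ A), X n (i, j)
        - ∑ j ∈ univ.filter (fun j => (j, i) ∈ A), X n (j, i)
        = ∑ k ∈ univ.filter (fun k : K => o k = n),
            ((if o k = i then (1 : ℝ) else 0) - (if s k = i then 1 else 0)) * d k)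
    -- FA capacity constraints
    ∧ (∀ a ∈ A, ∑ n : N, X n a ≤ u a * y a)
    -- FA strong inequalities
    ∧ (∀ (n : N), ∀ a ∈ A, X n a ≤ (∑ k ∈ univ.filter (fun k : K => o k = n), d k) * y a)
    -- nonnegativity
    ∧ (∀ n a, 0 ≤ X n a)
    -- equal objective value
    ∧ ((∑ a ∈ A, c a * ∑ n : N, X n a) + ∑ a ∈ A, f a * y a
        = (∑ a ∈ A, c a * ∑ b, ∑ D ∈ Gset (disp b) a, x b D a) + ∑ a ∈ A, f a * y a) := by
  classical
  have hXnn : ∀ n a, 0 ≤ X n a := by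
    intro n a
    rw [hX]
    exact Finset.sum_nonneg fun b _ => Finset.sum_nonneg fun D _ => hx b D a
  have hsumX : ∀ a, ∑ n : N, X n a = ∑ b, ∑ D ∈ Gset (disp b) a, x b D a := by
    intro a
    simp only [hX]
    exact Finset.sum_fiberwise _ _ _
  refine ⟨?_, ?_, ?_, hXnn, ?_⟩
  · intro n i
    simp only [hX]
    rw [Finset.sum_comm, Finset.sum_comm (s := univ.filter (fun j => (j, i) ∈ A)),
      ← Finset.sum_sub_distrib]
    rw [← fiber_sum o disp hcov horig n]
    exact Finset.sum_congr rfl fun b _ => hflow b i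
  · intro a ha
    rw [hsumX]
    exact hcap a ha
  · intro n a ha
    rw [hX]
    calc ∑ b ∈ univ.filter (fun b : B => (disp b).ob = n), ∑ D ∈ Gset (disp b) a, x b D a
        ≤ ∑ b ∈ univ.filter (fun b : B => (disp b).ob = n),
            ∑ D ∈ Gset (disp b) a, (∑ k ∈ D, d k) * y a := by
          refine Finset.sum_le_sum fun b _ => Finset.sum_le_sum fun D hD => hSI b a ha D hD
      _ = (∑ k ∈ univ.filter (fun k : K => o k = n), d k) * y a := by
          rw [Finset.sum_mul, ← fiber_sum o disp hcov horig n]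
          refine Finset.sum_congr rfl fun b _ => ?_
          rw [← Finset.sum_mul, Gsum_eq, Finset.sum_mul]
  · congr 1
    exact Finset.sum_congr rfl fun a _ => by rw [hsumX]
end

section
/- Consider the node-decomposition gadget of PAe at node i of dispersion b: the bipartite-layered artificial network from in-flow aggregated nodes Ť_b^i through intermediate nodes M_b^i to out-flow aggregated nodes T̂_b^i, with an artificial arc between two artificial nodes iff their commodity labels intersect. If every arriving aggregated flow x^C_{ji} (C ∈ Ť_b^i) and every arriving disaggregated flow decompose as sums of per-commodity flows x̄^k consistent with labels (x^C = ∑_{k∈C} x̄^k on the corresponding arcs), and per-commodity flow conservation holds at i, then a nonnegative feasible routing z through the gadget always exists; i.e., the gadget equalities (flow-eq-1)–(flow-eq-3) are satisfiable. -/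
open Finset
open scoped Classical

variable {N K : Type} [Fintype N] [DecidableEq N] [DecidableEq K]

section GadgetAux

variable {N K : Type} [Fintype N] [DecidableEq N] [DecidableEq K]

lemma lset_subset (A : Finset (N × N)) (b : Dispersion N K) (i : N) :
    Lset A b i ⊆ b.Kb := filter_subset _ _

lemma mset_subset (A : Finset (N × N)) (b : Dispersion N K) (i : N)
    {D : Finset K} (hD : D ∈ Mset A b i) : D ⊆ b.Kb := by
  rcases Finset.mem_insert.1 hD with h | h
  · subst h; exact sdiff_subset
  · rcases Finset.mem_image.1 h with ⟨k, hk, rfl⟩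
    simpa using lset_subset A b i hk

lemma mset_mem_cases (A : Finset (N × N)) (b : Dispersion N K) (i : N)
    {D : Finset K} {k : K} (hD : D ∈ Mset A b i) (hk : k ∈ D) :
    (D = {k} ∧ k ∈ Lset A b i) ∨ (D = b.Kb \ Lset A b i ∧ k ∉ Lset A b i) := by
  rcases Finset.mem_insert.1 hD with h | h
  · subst h; exact Or.inr ⟨rfl, (Finset.mem_sdiff.1 hk).2⟩
  · rcases Finset.mem_image.1 h with ⟨k', hk', rfl⟩
    rw [Finset.mem_singleton] at hk; subst hk
    exact Or.inl ⟨rfl, hk'⟩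

lemma mset_forces (A : Finset (N × N)) (b : Dispersion N K) (i : N)
    {D S : Finset K} (hD : D ∈ Mset A b i) (hS : S ⊆ Lset A b i)
    (hne : (D ∩ S).Nonempty) : D ⊆ S := by
  obtain ⟨k, hk⟩ := hne
  rw [Finset.mem_inter] at hk
  rcases mset_mem_cases A b i hD hk.1 with ⟨rfl, _⟩ | ⟨rfl, hkL⟩
  · intro k' hk'
    rw [Finset.mem_singleton] at hk'; subst hk'; exact hk.2
  · exact absurd (hS hk.2) hkL

lemma mset_partition (A : Finset (N × N)) (b : Dispersion N K) (i : N)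
    (f : K → ℝ) {C : Finset K} (hC : C ⊆ b.Kb) :
    ∑ D ∈ Mset A b i, ∑ k ∈ C ∩ D, f k = ∑ k ∈ C, f k := by
  have hdisj : (↑(Mset A b i) : Set (Finset K)).PairwiseDisjoint
      (fun D => C ∩ D) := by
    intro D₁ h₁ D₂ h₂ hne
    refine Finset.disjoint_left.2 fun k hk₁ hk₂ => hne ?_
    rw [Finset.mem_inter] at hk₁ hk₂
    rcases mset_mem_cases A b i h₁ hk₁.2 with ⟨rfl, hL⟩ | ⟨rfl, hL⟩ <;>
      rcases mset_mem_cases A b i h₂ hk₂.2 with ⟨rfl, hL'⟩ | ⟨rfl, hL'⟩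
    · rfl
    · exact absurd hL hL'
    · exact absurd hL' hL
    · rfl
  have hU : (Mset A b i).biUnion (fun D => C ∩ D) = C := by
    ext k
    simp only [Finset.mem_biUnion, Finset.mem_inter]
    constructor
    · rintro ⟨D, _, hk, _⟩; exact hk
    · intro hk
      by_cases hL : k ∈ Lset A b i
      · exact ⟨{k}, Finset.mem_insert_of_mem (Finset.mem_image_of_mem _ hL),
          hk, Finset.mem_singleton_self k⟩
      · exact ⟨_, Finset.mem_insert_self _ _, hk, Finset.mem_sdiff.2 ⟨hC hk, hL⟩⟩
  conv_rhs => rw [← hU]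
  exact (Finset.sum_biUnion hdisj).symm

lemma regroup {α : Type} [DecidableEq α] (s : Finset α) (e : α → Finset K) (G : α → ℝ)
    (h0 : ∀ j ∈ s, e j = ∅ → G j = 0) :
    ∑ C ∈ (s.image e).filter (fun C => C ≠ ∅),
        ∑ j ∈ s.filter (fun j => C = e j), G j
      = ∑ j ∈ s, G j := by
  have hdisj : (↑((s.image e).filter (fun C => C ≠ ∅)) : Set (Finset K)).PairwiseDisjoint
      (fun C => s.filter (fun j => C = e j)) := by
    intro C₁ _ C₂ _ hne
    refine Finset.disjoint_left.2 fun j hj₁ hj₂ => hne ?_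
    rw [(Finset.mem_filter.1 hj₁).2, (Finset.mem_filter.1 hj₂).2]
  rw [← Finset.sum_biUnion hdisj]
  have hU : ((s.image e).filter (fun C => C ≠ ∅)).biUnion
      (fun C => s.filter (fun j => C = e j)) = s.filter (fun j => e j ≠ ∅) := by
    ext j
    simp only [Finset.mem_biUnion, Finset.mem_filter, Finset.mem_image]
    constructor
    · rintro ⟨C, ⟨_, hne⟩, hj, rfl⟩
      exact ⟨hj, hne⟩
    · rintro ⟨hj, hne⟩
      exact ⟨e j, ⟨⟨j, hj, rfl⟩, hne⟩, hj, rfl⟩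
  rw [hU]
  exact Finset.sum_filter_of_ne fun j hj hG h => hG (h0 j hj h)

lemma db_in_sub (A : Finset (N × N)) (b : Dispersion N K) (i j : N)
    (hj : (j, i) ∈ A) : b.Db (j, i) ⊆ Lset A b i := fun k hk =>
  Finset.mem_filter.2 ⟨b.hDb _ hk, Or.inl ⟨j, hj, hk⟩⟩

lemma db_out_sub (A : Finset (N × N)) (b : Dispersion N K) (i j : N)
    (hj : (i, j) ∈ A) : b.Db (i, j) ⊆ Lset A b i := fun k hk =>
  Finset.mem_filter.2 ⟨b.hDb _ hk, Or.inr ⟨j, hj, hk⟩⟩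

lemma mset_if_split (A : Finset (N × N)) (b : Dispersion N K) (i : N)
    {D : Finset K} (hD : D ∈ Mset A b i) {S : Finset K} (hSL : S ⊆ Lset A b i)
    (f : K → ℝ) :
    (if (D ∩ S).Nonempty then ∑ k ∈ D, f k else 0) + ∑ k ∈ D ∩ (b.Kb \ S), f k
      = ∑ k ∈ D, f k := by
  have hDK := mset_subset A b i hD
  by_cases hne : (D ∩ S).Nonempty
  · have hsub := mset_forces A b i hD hSL hne
    have h0 : D ∩ (b.Kb \ S) = ∅ := by
      refine Finset.eq_empty_iff_forall_notMem.2 fun k hk => ?_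
      rw [Finset.mem_inter, Finset.mem_sdiff] at hk
      exact hk.2.2 (hsub hk.1)
    rw [if_pos hne, h0, Finset.sum_empty, add_zero]
  · have h0 : D ∩ S = ∅ := Finset.not_nonempty_iff_eq_empty.1 hne
    have hDeq : D ∩ (b.Kb \ S) = D := by
      ext k
      simp only [Finset.mem_inter, Finset.mem_sdiff]
      refine ⟨fun h => h.1, fun h => ⟨h, hDK h, fun hkS => ?_⟩⟩
      have hmem : k ∈ D ∩ S := Finset.mem_inter.2 ⟨h, hkS⟩
      rw [h0] at hmem
      exact absurd hmem (Finset.notMem_empty k)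
    rw [if_neg hne, hDeq, zero_add]

end GadgetAux

/-- at a node `i` of a dispersion layer `b`, if the flows on the
original arcs decompose as sums of per-commodity flows consistently with their
labels and per-commodity flow conservation holds at `i`, then there exists a
nonnegative routing `z` through the PAe gadget satisfying the gadget flow
conservation equalities (flow-eq-1)–(flow-eq-3). -/
theorem gadget_satisfiable
    (A : Finset (N × N)) (d : K → ℝ) (o s : K → N)
    (b : Dispersion N K) (i : N)
    (x : Finset K → N × N → ℝ)
    (xbar : K → N × N → ℝ)
    (hnn : ∀ k a, 0 ≤ xbar k a)
    (hagg : ∀ (D : Finset K) (a : N × N), x D a = ∑ k ∈ D, xbar k a)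
    (hflow : ∀ k ∈ b.Kb,
      ∑ j ∈ univ.filter (fun j => (i, j) ∈ A), xbar k (i, j)
        - ∑ j ∈ univ.filter (fun j => (j, i) ∈ A), xbar k (j, i)
        = ((if o k = i then (1 : ℝ) else 0) - (if s k = i then 1 else 0)) * d k) :
    ∃ zin zout : Finset K → Finset K → ℝ,
      (∀ C D, 0 ≤ zin C D ∧ 0 ≤ zout D C)
      -- (flow-eq-1) at the intermediate nodes
      ∧ (∀ D ∈ Mset A b i,
        (∑ j ∈ univ.filter (fun j => (i, j) ∈ A ∧ (D ∩ b.Db (i, j)).Nonempty), x D (i, j)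
          - ∑ j ∈ univ.filter (fun j => (j, i) ∈ A ∧ (D ∩ b.Db (j, i)).Nonempty), x D (j, i))
        + (∑ C ∈ (Tout A b i).filter (fun C => (D ∩ C).Nonempty), zout D C
          - ∑ C ∈ (Tin A b i).filter (fun C => (C ∩ D).Nonempty), zin C D)
        = ∑ k ∈ D, ((if o k = i then (1 : ℝ) else 0) - (if s k = i then 1 else 0)) * d k)
      -- (flow-eq-2) at the in-flow aggregated nodes
      ∧ (∀ C ∈ Tin A b i,
        ∑ D ∈ (Mset A b i).filter (fun D => (C ∩ D).Nonempty), zin C D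
          = ∑ j ∈ univ.filter (fun j => (j, i) ∈ A ∧ C = b.Kb \ b.Db (j, i)), x C (j, i))
      -- (flow-eq-3) at the out-flow aggregated nodes
      ∧ (∀ C ∈ Tout A b i,
        ∑ j ∈ univ.filter (fun j => (i, j) ∈ A ∧ C = b.Kb \ b.Db (i, j)), x C (i, j)
          = ∑ D ∈ (Mset A b i).filter (fun D => (C ∩ D).Nonempty), zout D C) := by
  classical
  set zin : Finset K → Finset K → ℝ := fun C D =>
    ∑ j ∈ univ.filter (fun j => (j, i) ∈ A ∧ C = b.Kb \ b.Db (j, i)),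
      ∑ k ∈ C ∩ D, xbar k (j, i) with hzin
  set zout : Finset K → Finset K → ℝ := fun D C =>
    ∑ j ∈ univ.filter (fun j => (i, j) ∈ A ∧ C = b.Kb \ b.Db (i, j)),
      ∑ k ∈ D ∩ C, xbar k (i, j) with hzout
  refine ⟨zin, zout, ?_, ?_, ?_, ?_⟩
  · intro C D
    constructor
    · exact Finset.sum_nonneg fun j _ => Finset.sum_nonneg fun k _ => hnn k _
    · exact Finset.sum_nonneg fun j _ => Finset.sum_nonneg fun k _ => hnn k _
  · -- flow-eq-1
    intro D hD
    have hDK : D ⊆ b.Kb := mset_subset A b i hD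
    -- out side
    have hout : (∑ j ∈ univ.filter (fun j => (i, j) ∈ A ∧ (D ∩ b.Db (i, j)).Nonempty), x D (i, j))
        + ∑ C ∈ (Tout A b i).filter (fun C => (D ∩ C).Nonempty), zout D C
        = ∑ j ∈ univ.filter (fun j => (i, j) ∈ A), ∑ k ∈ D, xbar k (i, j) := by
      have h1 : ∑ C ∈ (Tout A b i).filter (fun C => (D ∩ C).Nonempty), zout D C
          = ∑ C ∈ Tout A b i, zout D C := by
        refine Finset.sum_filter_of_ne fun C hC hne => ?_
        rw [Finset.nonempty_iff_ne_empty]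
        intro h
        exact hne (by simp [hzout, h])
      have h2 : ∑ C ∈ Tout A b i, zout D C
          = ∑ j ∈ univ.filter (fun j => (i, j) ∈ A),
              ∑ k ∈ D ∩ (b.Kb \ b.Db (i, j)), xbar k (i, j) := by
        rw [← regroup (univ.filter (fun j => (i, j) ∈ A)) (fun j => b.Kb \ b.Db (i, j))
          (fun j => ∑ k ∈ D ∩ (b.Kb \ b.Db (i, j)), xbar k (i, j))
          (fun j _ h => by simp [h])]
        refine Finset.sum_congr rfl fun C hC => ?_
        rw [hzout]
        simp only []
        rw [← Finset.filter_filter]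
        refine Finset.sum_congr rfl fun j hj => ?_
        rw [(Finset.mem_filter.1 hj).2]
      have h3 : ∑ j ∈ univ.filter (fun j => (i, j) ∈ A ∧ (D ∩ b.Db (i, j)).Nonempty), x D (i, j)
          = ∑ j ∈ univ.filter (fun j => (i, j) ∈ A),
              if (D ∩ b.Db (i, j)).Nonempty then ∑ k ∈ D, xbar k (i, j) else 0 := by
        rw [← Finset.filter_filter, Finset.sum_filter]
        refine Finset.sum_congr rfl fun j hj => ?_
        split_ifs with h
        · exact hagg D (i, j)
        · rfl
      rw [h1, h2, h3, ← Finset.sum_add_distrib]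
      refine Finset.sum_congr rfl fun j hj => ?_
      exact mset_if_split A b i hD (db_out_sub A b i j (Finset.mem_filter.1 hj).2) _
    -- in side
    have hin : (∑ j ∈ univ.filter (fun j => (j, i) ∈ A ∧ (D ∩ b.Db (j, i)).Nonempty), x D (j, i))
        + ∑ C ∈ (Tin A b i).filter (fun C => (C ∩ D).Nonempty), zin C D
        = ∑ j ∈ univ.filter (fun j => (j, i) ∈ A), ∑ k ∈ D, xbar k (j, i) := by
      have h1 : ∑ C ∈ (Tin A b i).filter (fun C => (C ∩ D).Nonempty), zin C D
          = ∑ C ∈ Tin A b i, zin C D := by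
        refine Finset.sum_filter_of_ne fun C hC hne => ?_
        rw [Finset.nonempty_iff_ne_empty]
        intro h
        exact hne (by simp [hzin, h])
      have h2 : ∑ C ∈ Tin A b i, zin C D
          = ∑ j ∈ univ.filter (fun j => (j, i) ∈ A),
              ∑ k ∈ D ∩ (b.Kb \ b.Db (j, i)), xbar k (j, i) := by
        rw [← regroup (univ.filter (fun j => (j, i) ∈ A)) (fun j => b.Kb \ b.Db (j, i))
          (fun j => ∑ k ∈ D ∩ (b.Kb \ b.Db (j, i)), xbar k (j, i))
          (fun j _ h => by simp [h])]
        refine Finset.sum_congr rfl fun C hC => ?_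
        rw [hzin]
        simp only []
        rw [← Finset.filter_filter]
        refine Finset.sum_congr rfl fun j hj => ?_
        rw [(Finset.mem_filter.1 hj).2, Finset.inter_comm]
      have h3 : ∑ j ∈ univ.filter (fun j => (j, i) ∈ A ∧ (D ∩ b.Db (j, i)).Nonempty), x D (j, i)
          = ∑ j ∈ univ.filter (fun j => (j, i) ∈ A),
              if (D ∩ b.Db (j, i)).Nonempty then ∑ k ∈ D, xbar k (j, i) else 0 := by
        rw [← Finset.filter_filter, Finset.sum_filter]
        refine Finset.sum_congr rfl fun j hj => ?_
        split_ifs with h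
        · exact hagg D (j, i)
        · rfl
      rw [h1, h2, h3, ← Finset.sum_add_distrib]
      refine Finset.sum_congr rfl fun j hj => ?_
      exact mset_if_split A b i hD (db_in_sub A b i j (Finset.mem_filter.1 hj).2) _
    have key :
        (∑ j ∈ univ.filter (fun j => (i, j) ∈ A ∧ (D ∩ b.Db (i, j)).Nonempty), x D (i, j)
          - ∑ j ∈ univ.filter (fun j => (j, i) ∈ A ∧ (D ∩ b.Db (j, i)).Nonempty), x D (j, i))
        + (∑ C ∈ (Tout A b i).filter (fun C => (D ∩ C).Nonempty), zout D C
          - ∑ C ∈ (Tin A b i).filter (fun C => (C ∩ D).Nonempty), zin C D)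
        = (∑ j ∈ univ.filter (fun j => (i, j) ∈ A), ∑ k ∈ D, xbar k (i, j))
          - ∑ j ∈ univ.filter (fun j => (j, i) ∈ A), ∑ k ∈ D, xbar k (j, i) := by
      rw [← hout, ← hin]; ring
    rw [key, Finset.sum_comm, Finset.sum_comm (s := univ.filter (fun j => (j, i) ∈ A)),
      ← Finset.sum_sub_distrib]
    exact Finset.sum_congr rfl fun k hk => hflow k (hDK hk)
  · -- flow-eq-2
    intro C hC
    have hCK : C ⊆ b.Kb := by
      obtain ⟨hC1, _⟩ := Finset.mem_filter.1 hC
      obtain ⟨j, _, rfl⟩ := Finset.mem_image.1 hC1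
      exact sdiff_subset
    have h1 : ∑ D ∈ (Mset A b i).filter (fun D => (C ∩ D).Nonempty), zin C D
        = ∑ D ∈ Mset A b i, zin C D := by
      refine Finset.sum_filter_of_ne fun D hD hne => ?_
      rw [Finset.nonempty_iff_ne_empty]
      intro h
      exact hne (by simp [hzin, h])
    rw [h1, hzin]
    simp only []
    rw [Finset.sum_comm]
    refine Finset.sum_congr rfl fun j hj => ?_
    rw [mset_partition A b i _ hCK, hagg]
  · -- flow-eq-3
    intro C hC
    have hCK : C ⊆ b.Kb := by
      obtain ⟨hC1, _⟩ := Finset.mem_filter.1 hC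
      obtain ⟨j, _, rfl⟩ := Finset.mem_image.1 hC1
      exact sdiff_subset
    have h1 : ∑ D ∈ (Mset A b i).filter (fun D => (C ∩ D).Nonempty), zout D C
        = ∑ D ∈ Mset A b i, zout D C := by
      refine Finset.sum_filter_of_ne fun D hD hne => ?_
      rw [Finset.nonempty_iff_ne_empty]
      intro h
      exact hne (by simp [hzout, Finset.inter_comm D C, h])
    rw [h1, hzout]
    simp only []
    rw [Finset.sum_comm]
    refine (Finset.sum_congr rfl fun j hj => ?_)
    have : ∑ D ∈ Mset A b i, ∑ k ∈ D ∩ C, xbar k (i, j)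
        = ∑ D ∈ Mset A b i, ∑ k ∈ C ∩ D, xbar k (i, j) := by
      refine Finset.sum_congr rfl fun D _ => ?_
      rw [Finset.inter_comm]
    rw [this, mset_partition A b i _ hCK, hagg]
end
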